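/- Suppose f is β-smooth, ρ < 1/(2β), η < 1/β, and a sequence satisfies w_{t+1} = w_t - η((1-ξ_t)∇f(w_t) + ξ_t ∇f(w_t + ρ∇f(w_t))) with ξ_t ∈ {0,1}. Then for each t, f(w_{t+1}) ≤ f(w_t) - η(1 - βη/2 - βρ ξ_t)||∇f(w_t)||². -/

import Mathlib

/-! The β-Lipschitz gradient gives the quadratic upper bound
`f y ≤ f x + ⟪∇f x, y - x⟫ + β/2 ‖y - x‖²`. Along the step `y = w - η u` with
`u = ∇f w + δ`, the perturbation `δ = ξ (∇f (w + ρ ∇f w) - ∇f w)` has norm at most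
`βρξ ‖∇f w‖`, and since `βη ≤ 1` and `βρ ≤ 2` its contribution to the bound is at most
`ηβρξ ‖∇f w‖²`. -/

open RealInnerProductSpace

section LipschitzGradient

variable {E : Type*} [NormedAddCommGroup E] [InnerProductSpace ℝ E]
  {f : E → ℝ} {f' : E → E} {β : ℝ}

theorem neg_inner_add_sq_le_of_norm_sub_le {g u : E} {η c : ℝ} (hη : 0 ≤ η) (hβ : 0 ≤ β)
    (hβη : β * η ≤ 1) (hc : 0 ≤ c) (hc2 : c ≤ 2) (hu : ‖u - g‖ ≤ c * ‖g‖) :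
    -(η * ⟪g, u⟫) + β * η ^ 2 / 2 * ‖u‖ ^ 2 ≤ -(η * (1 - β * η / 2 - c) * ‖g‖ ^ 2) := by
  set δ := u - g
  have hinner : ⟪g, u⟫ = ‖g‖ ^ 2 + ⟪g, δ⟫ := by
    rw [inner_sub_right, real_inner_self_eq_norm_sq]; ring
  have hnorm : ‖u‖ ^ 2 = ‖g‖ ^ 2 + 2 * ⟪g, δ⟫ + ‖δ‖ ^ 2 := by
    rw [← norm_add_sq_real, add_sub_cancel]
  have hcross : -⟪g, δ⟫ ≤ c * ‖g‖ ^ 2 := by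
    have := neg_le_of_abs_le (abs_real_inner_le_norm g δ)
    nlinarith [norm_nonneg g]
  have hδsq : ‖δ‖ ^ 2 ≤ c ^ 2 * ‖g‖ ^ 2 := by
    rw [← mul_pow]; exact pow_le_pow_left₀ (norm_nonneg δ) hu 2
  rw [hinner, hnorm]
  -- The surplus over the claim is `β η² c (c/2 - 1) ‖g‖² ≤ 0`.
  nlinarith [mul_le_mul_of_nonneg_left hcross (mul_nonneg hη (sub_nonneg.2 hβη)),
    mul_le_mul_of_nonneg_left hδsq (by positivity : 0 ≤ β * η ^ 2 / 2),
    mul_nonneg (mul_nonneg (by positivity : 0 ≤ β * η ^ 2 * c) (sq_nonneg ‖g‖))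
      (by linarith : 0 ≤ 1 - c / 2)]

theorem inner_sub_le_of_lipschitz_gradient (hlip : ∀ w v, ‖f' w - f' v‖ ≤ β * ‖w - v‖)
    (x v : E) {t : ℝ} (ht : 0 ≤ t) :
    ⟪f' (x + t • v) - f' x, v⟫ ≤ β * t * ‖v‖ ^ 2 := by
  have hdist : ‖x + t • v - x‖ = t * ‖v‖ := by
    rw [add_sub_cancel_left, norm_smul, Real.norm_of_nonneg ht]
  calc ⟪f' (x + t • v) - f' x, v⟫ ≤ ‖f' (x + t • v) - f' x‖ * ‖v‖ := real_inner_le_norm _ _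
    _ ≤ β * (t * ‖v‖) * ‖v‖ := by
        gcongr
        rw [← hdist]
        exact hlip (x + t • v) x
    _ = β * t * ‖v‖ ^ 2 := by ring

variable [CompleteSpace E]

theorem HasGradientAt.hasDerivAt_comp_add_smul {g x v : E} {t : ℝ}
    (h : HasGradientAt f g (x + t • v)) :
    HasDerivAt (fun s : ℝ => f (x + s • v)) ⟪g, v⟫ t := by
  have hline : HasDerivAt (fun s : ℝ => x + s • v) v t := by
    simpa using ((hasDerivAt_id t).smul_const v).const_add x
  simpa [InnerProductSpace.toDual_apply_apply, Function.comp_def] using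
    h.hasFDerivAt.comp_hasDerivAt t hline

theorem le_add_inner_add_of_lipschitz_gradient (hgrad : ∀ w, HasGradientAt f (f' w) w)
    (hlip : ∀ w v, ‖f' w - f' v‖ ≤ β * ‖w - v‖) (x y : E) :
    f y ≤ f x + ⟪f' x, y - x⟫ + β / 2 * ‖y - x‖ ^ 2 := by
  set v := y - x
  -- `φ t` is the gap between the quadratic model and `f` along the segment; `φ' ≥ 0`.
  set φ : ℝ → ℝ := fun t => β / 2 * t ^ 2 * ‖v‖ ^ 2 + t * ⟪f' x, v⟫ - f (x + t • v)
  have hφ : ∀ t, HasDerivAt φ (β * t * ‖v‖ ^ 2 - ⟪f' (x + t • v) - f' x, v⟫) t := by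
    intro t
    have hmodel : HasDerivAt (fun s : ℝ => β / 2 * s ^ 2 * ‖v‖ ^ 2 + s * ⟪f' x, v⟫)
        (β * t * ‖v‖ ^ 2 + ⟪f' x, v⟫) t := by
      refine ((((hasDerivAt_pow 2 t).const_mul (β / 2)).mul_const (‖v‖ ^ 2)).add
        ((hasDerivAt_id t).mul_const ⟪f' x, v⟫)).congr_deriv ?_
      push_cast
      ring
    refine (hmodel.sub (hgrad (x + t • v)).hasDerivAt_comp_add_smul).congr_deriv ?_
    rw [inner_sub_left]
    ring
  have hmono : MonotoneOn φ (Set.Ici 0) := by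
    refine monotoneOn_of_deriv_nonneg (convex_Ici 0)
      (fun t _ => (hφ t).continuousAt.continuousWithinAt)
      (fun t _ => (hφ t).differentiableAt.differentiableWithinAt) fun t ht => ?_
    rw [interior_Ici] at ht
    rw [(hφ t).deriv, sub_nonneg]
    exact inner_sub_le_of_lipschitz_gradient hlip x v ht.le
  have h01 : φ 0 ≤ φ 1 := hmono Set.self_mem_Ici (Set.mem_Ici.2 zero_le_one) zero_le_one
  simp only [φ, v, zero_smul, add_zero, one_smul, add_sub_cancel] at h01
  linarith

theorem le_sub_inner_add_of_lipschitz_gradient (hgrad : ∀ w, HasGradientAt f (f' w) w)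
    (hlip : ∀ w v, ‖f' w - f' v‖ ≤ β * ‖w - v‖) (x u : E) (η : ℝ) :
    f (x - η • u) ≤ f x - η * ⟪f' x, u⟫ + β * η ^ 2 / 2 * ‖u‖ ^ 2 := by
  have h := le_add_inner_add_of_lipschitz_gradient hgrad hlip x (x - η • u)
  rw [sub_sub_cancel_left, inner_neg_right, norm_neg, inner_smul_right, norm_smul,
    mul_pow, Real.norm_eq_abs, sq_abs] at h
  linarith

end LipschitzGradient

/-- Per-step descent for the mixed SAM/ERM full-batch update. -/
theorem mixed_sam_erm_descent_step
    {d : ℕ} (f : EuclideanSpace ℝ (Fin d) → ℝ)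
    (f' : EuclideanSpace ℝ (Fin d) → EuclideanSpace ℝ (Fin d))
    (hgrad : ∀ w, HasGradientAt f (f' w) w)
    (β η ρ : ℝ) (hβ : 0 < β) (hη : 0 < η) (hρ : 0 < ρ)
    (hηβ : η < 1 / β) (hρβ : ρ < 1 / (2 * β))
    (hlip : ∀ w v, ‖f' w - f' v‖ ≤ β * ‖w - v‖)
    (w : ℕ → EuclideanSpace ℝ (Fin d)) (ξ : ℕ → ℝ)
    (hξ : ∀ t, ξ t = 0 ∨ ξ t = 1)
    (hupd : ∀ t, w (t + 1) =
      w t - η • ((1 - ξ t) • f' (w t) + ξ t • f' (w t + ρ • f' (w t)))) :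
    ∀ t, f (w (t + 1)) ≤
      f (w t) - η * (1 - β * η / 2 - β * ρ * ξ t) * ‖f' (w t)‖ ^ 2 := by
  intro t
  have hβη : β * η ≤ 1 := by rw [lt_div_iff₀ hβ] at hηβ; linarith
  have hβρ : β * ρ ≤ 1 := by rw [lt_div_iff₀ (by positivity)] at hρβ; linarith
  have hξ01 : 0 ≤ ξ t ∧ ξ t ≤ 1 := by rcases hξ t with h | h <;> rw [h] <;> norm_num
  set g := f' (w t)
  set u := (1 - ξ t) • g + ξ t • f' (w t + ρ • g)
  have hsam : ‖f' (w t + ρ • g) - g‖ ≤ β * ρ * ‖g‖ := by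
    simpa [norm_smul, abs_of_pos hρ, mul_assoc] using hlip (w t + ρ • g) (w t)
  have hu : ‖u - g‖ ≤ β * ρ * ξ t * ‖g‖ := by
    have hug : u - g = ξ t • (f' (w t + ρ • g) - g) := by
      simp only [u, sub_smul, one_smul, smul_sub]; abel
    rw [hug, norm_smul, Real.norm_of_nonneg hξ01.1]
    nlinarith [norm_nonneg g]
  have hstep := le_sub_inner_add_of_lipschitz_gradient hgrad hlip (w t) u η
  have hbound := neg_inner_add_sq_le_of_norm_sub_le hη.le hβ.le hβη
    (mul_nonneg (by positivity) hξ01.1) (by nlinarith) hu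
  rw [hupd t]
  linarith
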